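/- arXiv:2301.13172 — 7 statements merged into one kernel-verified Lean document; each statement's English description precedes it below -/
import Mathlib

section
/- Let q ∈ ℂ with q ≠ 0 and q² ≠ 1, and for m ∈ ℤ set [m] := (q^m − q^{−m})/(q − q⁻¹). Define μ(s,t) := [s]·[t]·[s−t]·[s+t] for s,t ∈ ℤ. Then for all integers s and t: μ(s+1, t) + μ(s−1, t) + μ(s, t+1) + μ(s, t−1) = [4]·μ(s,t). -/
/-!
Up to the factor `(q - q⁻¹)⁴`, `μ(s,t)` is the product of `e^α - e^{-α}` over the positive roots
`ε₁, ε₂, ε₁ - ε₂, ε₁ + ε₂` of `B₂`, at `e^{ε₁} = q^s`, `e^{ε₂} = q^t`; and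
`[4] = q³ + q + q⁻¹ + q⁻³` is the character of the vector representation (weights `±ε₁, ±ε₂`)
evaluated at `q^{2ρ}`, `2ρ = (3,1)`. The eigenvector equation is therefore,
after clearing denominators, a Laurent polynomial identity in `q`, `q^s`, `q^t`.
-/

/-- Quantum integer `[m]_q = (q^m - q^{-m})/(q - q⁻¹)`. -/
noncomputable def qint (q : ℂ) (m : ℤ) : ℂ := (q ^ m - q ^ (-m)) / (q - q⁻¹)

/-- Frobenius–Perron weight `μ(s,t) = [s][t][s−t][s+t]`. -/
noncomputable def fpWeight (q : ℂ) (s t : ℤ) : ℂ :=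
  qint q s * qint q t * qint q (s - t) * qint q (s + t)

section WeylDenominator

variable {K : Type*} [Field K]

def weylDenominatorB₂ (x y : K) : K :=
  (x - x⁻¹) * (y - y⁻¹) * (x / y - (x / y)⁻¹) * (x * y - (x * y)⁻¹)

theorem sub_inv_mul_sum_weylDenominatorB₂_neighbours {q x y : K}
    (hq : q ≠ 0) (hx : x ≠ 0) (hy : y ≠ 0) :
    (q - q⁻¹) * (weylDenominatorB₂ (x * q) y + weylDenominatorB₂ (x * q⁻¹) y +
        weylDenominatorB₂ x (y * q) + weylDenominatorB₂ x (y * q⁻¹)) =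
      (q ^ 4 - (q ^ 4)⁻¹) * weylDenominatorB₂ x y := by
  unfold weylDenominatorB₂
  field_simp
  ring

theorem sub_inv_ne_zero {q : K} (hq0 : q ≠ 0) (hq2 : q ^ 2 ≠ 1) : q - q⁻¹ ≠ 0 := by
  intro h
  apply hq2
  rw [sub_eq_zero] at h
  rw [sq, ← mul_inv_cancel₀ hq0, ← h]

end WeylDenominator

theorem qint_eq (q : ℂ) (m : ℤ) : qint q m = (q ^ m - (q ^ m)⁻¹) / (q - q⁻¹) := by
  rw [qint, zpow_neg]

theorem fpWeight_eq_weylDenominatorB₂ {q : ℂ} (hq : q ≠ 0) (s t : ℤ) :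
    fpWeight q s t = weylDenominatorB₂ (q ^ s) (q ^ t) / (q - q⁻¹) ^ 4 := by
  simp only [fpWeight, qint_eq, weylDenominatorB₂, zpow_sub₀ hq, zpow_add₀ hq]
  rw [div_eq_mul_inv _ ((q - q⁻¹) ^ 4), ← inv_pow]
  ring

theorem qint_four (q : ℂ) : qint q 4 = (q ^ 4 - (q ^ 4)⁻¹) / (q - q⁻¹) := by
  simp only [qint, zpow_neg]
  norm_cast

/-- The weights μ form an eigenvector with eigenvalue [4] of the adjacency
matrix of the charge-conjugation graph. -/
theorem fpWeight_eigenvector (q : ℂ) (hq0 : q ≠ 0) (hq2 : q ^ 2 ≠ 1)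
    (s t : ℤ) :
    fpWeight q (s + 1) t + fpWeight q (s - 1) t +
      fpWeight q s (t + 1) + fpWeight q s (t - 1)
      = qint q 4 * fpWeight q s t := by
  have hd := sub_inv_ne_zero hq0 hq2
  have key := sub_inv_mul_sum_weylDenominatorB₂_neighbours hq0
    (zpow_ne_zero s hq0) (zpow_ne_zero t hq0)
  simp only [fpWeight_eq_weylDenominatorB₂ hq0, zpow_add_one₀ hq0, zpow_sub_one₀ hq0, qint_four]
  rw [div_mul_div_comm, ← key, mul_div_mul_left _ _ hd, add_div, add_div, add_div]
end

section
/- Let q ∈ ℂ with q ≠ 0 and q² ≠ 1, set [m] := (q^m − q^{−m})/(q − q⁻¹) for m ∈ ℤ and μ(s,t) := [s][t][s−t][s+t]. Let s, t ∈ ℤ satisfy [s−t] ≠ 0, [s+t] ≠ 0, [2s+1] ≠ 0 and μ(s+1, t) ≠ 0. Then (μ(s,t)·[2s+2] + μ(s+1,t)) / ([2s+1]·μ(s+1,t)) + ([s−t+1]/[s−t])·(μ(s+1,t+1)/μ(s+1,t)) + ([s+t+1]/[s+t])·(μ(s+1,t−1)/μ(s+1,t)) = [3]. -/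
set_option maxHeartbeats 1000000 in
/-- Relation (R1) of the Kazhdan–Wenzl cell system on Γ^{4,k,*} in the
direction ε₁ (generic case [2ā₁+1] ≠ 0). -/
theorem charge_conjugation_R1_eps1 (q : ℂ) (hq0 : q ≠ 0) (hq2 : q ^ 2 ≠ 1)
    (s t : ℤ) (h1 : qint q (s - t) ≠ 0) (h2 : qint q (s + t) ≠ 0)
    (h3 : qint q (2 * s + 1) ≠ 0) (h4 : fpWeight q (s + 1) t ≠ 0) :
    (fpWeight q s t * qint q (2 * s + 2) + fpWeight q (s + 1) t) /
        (qint q (2 * s + 1) * fpWeight q (s + 1) t)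
      + (qint q (s - t + 1) / qint q (s - t)) *
          (fpWeight q (s + 1) (t + 1) / fpWeight q (s + 1) t)
      + (qint q (s + t + 1) / qint q (s + t)) *
          (fpWeight q (s + 1) (t - 1) / fpWeight q (s + 1) t)
      = qint q 3 := by
  have hq2' : q * q - 1 ≠ 0 := by
    intro h; exact hq2 (by rw [sq]; linear_combination h)
  have key : ∀ (m : ℤ) (U V : ℂ), U ≠ 0 → V ≠ 0 → q ^ m = U / V →
      qint q m = q * (U * U - V * V) / (U * V * (q * q - 1)) := by
    intro m U V hU hV h
    have hd : q - q⁻¹ ≠ 0 := by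
      intro h0
      apply hq2'
      have : q = q⁻¹ := sub_eq_zero.mp h0
      field_simp at this
      linear_combination this
    rw [qint, zpow_neg, h]
    field_simp
  have hA : q ^ s ≠ 0 := zpow_ne_zero _ hq0
  have hB : q ^ t ≠ 0 := zpow_ne_zero _ hq0
  set a := q ^ s with ha
  set b := q ^ t with hb
  clear_value a b
  have hab : a * b ≠ 0 := mul_ne_zero hA hB
  have h1' : (0:ℂ) ≠ 1 := zero_ne_one
  simp only [fpWeight] at h4 ⊢
  have k0 : qint q (s) = q * (a * (a) - 1 * (1)) / (a * (1) * (q * q - 1)) := key _ _ _ (hA) (one_ne_zero) (by rw [div_one, ha])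
  have k1 : qint q (t) = q * (b * (b) - 1 * (1)) / (b * (1) * (q * q - 1)) := key _ _ _ (hB) (one_ne_zero) (by rw [div_one, hb])
  have k2 : qint q (s - t) = q * (a * (a) - b * (b)) / (a * (b) * (q * q - 1)) := key _ _ _ (hA) (hB) (by rw [zpow_sub₀ hq0, ha, hb])
  have k3 : qint q (s + t) = q * (a * b * (a * b) - 1 * (1)) / (a * b * (1) * (q * q - 1)) := key _ _ _ (mul_ne_zero (hA) (hB)) (one_ne_zero) (by rw [div_one, zpow_add₀ hq0, ha, hb])
  have k4 : qint q (2 * s + 1) = q * (a * a * q * (a * a * q) - 1 * (1)) / (a * a * q * (1) * (q * q - 1)) := key _ _ _ (mul_ne_zero (mul_ne_zero (hA) (hA)) (hq0)) (one_ne_zero) (by rw [div_one, show 2 * s + 1 = s + s + 1 by ring, zpow_add₀ hq0, zpow_add₀ hq0, zpow_one, ha])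
  have k5 : qint q (2 * s + 2) = q * (a * a * q * q * (a * a * q * q) - 1 * (1)) / (a * a * q * q * (1) * (q * q - 1)) := key _ _ _ (mul_ne_zero (mul_ne_zero (mul_ne_zero (hA) (hA)) (hq0)) (hq0)) (one_ne_zero) (by rw [div_one, show 2 * s + 2 = s + s + 1 + 1 by ring, zpow_add₀ hq0, zpow_add₀ hq0, zpow_add₀ hq0, zpow_one, ha])
  have k6 : qint q (s + 1) = q * (a * q * (a * q) - 1 * (1)) / (a * q * (1) * (q * q - 1)) := key _ _ _ (mul_ne_zero (hA) (hq0)) (one_ne_zero) (by rw [div_one, zpow_add₀ hq0, zpow_one, ha])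
  have k7 : qint q (s + 1 - t) = q * (a * q * (a * q) - b * (b)) / (a * q * (b) * (q * q - 1)) := key _ _ _ (mul_ne_zero (hA) (hq0)) (hB) (by rw [zpow_sub₀ hq0, zpow_add₀ hq0, zpow_one, ha, hb])
  have k8 : qint q (s + 1 + t) = q * (a * q * b * (a * q * b) - 1 * (1)) / (a * q * b * (1) * (q * q - 1)) := key _ _ _ (mul_ne_zero (mul_ne_zero (hA) (hq0)) (hB)) (one_ne_zero) (by rw [div_one, zpow_add₀ hq0, zpow_add₀ hq0, zpow_one, ha, hb])
  have k9 : qint q (s - t + 1) = q * (a * q * (a * q) - b * (b)) / (a * q * (b) * (q * q - 1)) := key _ _ _ (mul_ne_zero (hA) (hq0)) (hB) (by rw [show s - t + 1 = s + 1 - t by ring, zpow_sub₀ hq0, zpow_add₀ hq0, zpow_one, ha, hb])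
  have k10 : qint q (s + t + 1) = q * (a * q * b * (a * q * b) - 1 * (1)) / (a * q * b * (1) * (q * q - 1)) := key _ _ _ (mul_ne_zero (mul_ne_zero (hA) (hq0)) (hB)) (one_ne_zero) (by rw [div_one, show s + t + 1 = s + 1 + t by ring, zpow_add₀ hq0, zpow_add₀ hq0, zpow_one, ha, hb])
  have k11 : qint q (t + 1) = q * (b * q * (b * q) - 1 * (1)) / (b * q * (1) * (q * q - 1)) := key _ _ _ (mul_ne_zero (hB) (hq0)) (one_ne_zero) (by rw [div_one, zpow_add₀ hq0, zpow_one, hb])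
  have k12 : qint q (t - 1) = q * (b * (b) - q * (q)) / (b * (q) * (q * q - 1)) := key _ _ _ (hB) (hq0) (by rw [zpow_sub₀ hq0, zpow_one, hb])
  have k13 : qint q (s + 1 - (t + 1)) = q * (a * (a) - b * (b)) / (a * (b) * (q * q - 1)) := key _ _ _ (hA) (hB) (by rw [show s + 1 - (t + 1) = s - t by ring, zpow_sub₀ hq0, ha, hb])
  have k14 : qint q (s + 1 + (t + 1)) = q * (a * q * b * q * (a * q * b * q) - 1 * (1)) / (a * q * b * q * (1) * (q * q - 1)) := key _ _ _ (mul_ne_zero (mul_ne_zero (mul_ne_zero (hA) (hq0)) (hB)) (hq0)) (one_ne_zero) (by rw [div_one, show s + 1 + (t + 1) = s + 1 + t + 1 by ring, zpow_add₀ hq0, zpow_add₀ hq0, zpow_add₀ hq0, zpow_one, ha, hb])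
  have k15 : qint q (s + 1 - (t - 1)) = q * (a * q * q * (a * q * q) - b * (b)) / (a * q * q * (b) * (q * q - 1)) := key _ _ _ (mul_ne_zero (mul_ne_zero (hA) (hq0)) (hq0)) (hB) (by rw [show s + 1 - (t - 1) = s + 1 + 1 - t by ring, zpow_sub₀ hq0, zpow_add₀ hq0, zpow_add₀ hq0, zpow_one, ha, hb])
  have k16 : qint q (s + 1 + (t - 1)) = q * (a * b * (a * b) - 1 * (1)) / (a * b * (1) * (q * q - 1)) := key _ _ _ (mul_ne_zero (hA) (hB)) (one_ne_zero) (by rw [div_one, show s + 1 + (t - 1) = s + t by ring, zpow_add₀ hq0, ha, hb])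
  have k17 : qint q ((3 : ℤ)) = q * (q * q * q * (q * q * q) - 1 * (1)) / (q * q * q * (1) * (q * q - 1)) := key _ _ _ (mul_ne_zero (mul_ne_zero (hq0) (hq0)) (hq0)) (one_ne_zero) (by rw [div_one, show (3:ℤ) = 1 + 1 + 1 by ring, zpow_add₀ hq0, zpow_add₀ hq0, zpow_one])
  rw [k2] at h1
  rw [k3] at h2
  rw [k4] at h3
  rw [k6, k1, k7, k8] at h4
  simp only [k0, k1, k2, k3, k4, k5, k6, k7, k8, k9, k10, k11, k12, k13, k14, k15, k16, k17]
  have n_st : a * a - b * b ≠ 0 := fun h => h1 (by rw [h]; simp)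
  have n_spt : a * b * (a * b) - 1 ≠ 0 := fun h => h2 (by rw [show a * b * (a * b) - 1 * 1 = a * b * (a * b) - 1 by ring, h]; simp)
  have n_2s1 : a * a * q * (a * a * q) - 1 ≠ 0 := fun h => h3 (by rw [show a * a * q * (a * a * q) - 1 * 1 = a * a * q * (a * a * q) - 1 by ring, h]; simp)
  rw [mul_ne_zero_iff, mul_ne_zero_iff, mul_ne_zero_iff] at h4
  obtain ⟨⟨⟨g1, g2⟩, g3⟩, g4⟩ := h4
  have n_s1 : a * q * (a * q) - 1 ≠ 0 := fun h => g1 (by rw [show a * q * (a * q) - 1 * 1 = a * q * (a * q) - 1 by ring, h]; simp)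
  have n_t : b * b - 1 ≠ 0 := fun h => g2 (by rw [show b * b - 1 * 1 = b * b - 1 by ring, h]; simp)
  have n_st1 : a * q * (a * q) - b * b ≠ 0 := fun h => g3 (by rw [h]; simp)
  have n_spt1 : a * q * b * (a * q * b) - 1 ≠ 0 := fun h => g4 (by rw [show a * q * b * (a * q * b) - 1 * 1 = a * q * b * (a * q * b) - 1 by ring, h]; simp)
  have E1 : (q * (a * a - 1 * 1) / (a * 1 * (q * q - 1)) * (q * (b * b - 1 * 1) / (b * 1 * (q * q - 1))) *
                  (q * (a * a - b * b) / (a * b * (q * q - 1))) *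
                (q * (a * b * (a * b) - 1 * 1) / (a * b * 1 * (q * q - 1))) *
              (q * (a * a * q * q * (a * a * q * q) - 1 * 1) / (a * a * q * q * 1 * (q * q - 1))) +
            q * (a * q * (a * q) - 1 * 1) / (a * q * 1 * (q * q - 1)) * (q * (b * b - 1 * 1) / (b * 1 * (q * q - 1))) *
                (q * (a * q * (a * q) - b * b) / (a * q * b * (q * q - 1))) *
              (q * (a * q * b * (a * q * b) - 1 * 1) / (a * q * b * 1 * (q * q - 1)))) /
          (q * (a * a * q * (a * a * q) - 1 * 1) / (a * a * q * 1 * (q * q - 1)) *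
            (q * (a * q * (a * q) - 1 * 1) / (a * q * 1 * (q * q - 1)) * (q * (b * b - 1 * 1) / (b * 1 * (q * q - 1))) *
                (q * (a * q * (a * q) - b * b) / (a * q * b * (q * q - 1))) *
              (q * (a * q * b * (a * q * b) - 1 * 1) / (a * q * b * 1 * (q * q - 1)))))
      = (q * q * (a * a - 1) * (a * a - b * b) * (a * b * (a * b) - 1) * (a * a * q * q * (a * a * q * q) - 1) +
          (q * q - 1) * (a * a) * (a * q * (a * q) - 1) * (a * q * (a * q) - b * b) * (a * q * b * (a * q * b) - 1)) /
        ((a * a * q * (a * a * q) - 1) * ((a * q * (a * q) - 1) * ((a * q * (a * q) - b * b) * (a * q * b * (a * q * b) - 1)))) := by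
    simp only [div_div_eq_mul_div, div_mul_eq_mul_div, mul_div_assoc', div_div, one_mul, mul_one]
    rw [div_add_div _ _ (by (repeat' apply mul_ne_zero) <;> first | assumption | exact one_ne_zero) (by (repeat' apply mul_ne_zero) <;> first | assumption | exact one_ne_zero)]
    simp only [div_div_eq_mul_div, div_mul_eq_mul_div, mul_div_assoc', div_div, one_mul, mul_one]
    rw [div_eq_div_iff (by (repeat' apply mul_ne_zero) <;> first | assumption | exact one_ne_zero) (by (repeat' apply mul_ne_zero) <;> first | assumption | exact one_ne_zero)]
    ring
  have E2 : q * (a * q * (a * q) - b * b) / (a * q * b * (q * q - 1)) / (q * (a * a - b * b) / (a * b * (q * q - 1))) *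
          (q * (a * q * (a * q) - 1 * 1) / (a * q * 1 * (q * q - 1)) *
                  (q * (b * q * (b * q) - 1 * 1) / (b * q * 1 * (q * q - 1))) *
                (q * (a * a - b * b) / (a * b * (q * q - 1))) *
              (q * (a * q * b * q * (a * q * b * q) - 1 * 1) / (a * q * b * q * 1 * (q * q - 1))) /
            (q * (a * q * (a * q) - 1 * 1) / (a * q * 1 * (q * q - 1)) * (q * (b * b - 1 * 1) / (b * 1 * (q * q - 1))) *
                (q * (a * q * (a * q) - b * b) / (a * q * b * (q * q - 1))) *
              (q * (a * q * b * (a * q * b) - 1 * 1) / (a * q * b * 1 * (q * q - 1)))))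
      = (b * q * (b * q) - 1) * (a * q * b * q * (a * q * b * q) - 1) /
          (q * q * ((b * b - 1) * (a * q * b * (a * q * b) - 1))) := by
    simp only [div_div_eq_mul_div, div_mul_eq_mul_div, mul_div_assoc', div_div, one_mul, mul_one]
    rw [div_eq_div_iff (by (repeat' apply mul_ne_zero) <;> first | assumption | exact one_ne_zero) (by (repeat' apply mul_ne_zero) <;> first | assumption | exact one_ne_zero)]
    ring
  have E3 : q * (a * q * b * (a * q * b) - 1 * 1) / (a * q * b * 1 * (q * q - 1)) /
          (q * (a * b * (a * b) - 1 * 1) / (a * b * 1 * (q * q - 1))) *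
        (q * (a * q * (a * q) - 1 * 1) / (a * q * 1 * (q * q - 1)) * (q * (b * b - q * q) / (b * q * (q * q - 1))) *
              (q * (a * q * q * (a * q * q) - b * b) / (a * q * q * b * (q * q - 1))) *
            (q * (a * b * (a * b) - 1 * 1) / (a * b * 1 * (q * q - 1))) /
          (q * (a * q * (a * q) - 1 * 1) / (a * q * 1 * (q * q - 1)) * (q * (b * b - 1 * 1) / (b * 1 * (q * q - 1))) *
              (q * (a * q * (a * q) - b * b) / (a * q * b * (q * q - 1))) *
            (q * (a * q * b * (a * q * b) - 1 * 1) / (a * q * b * 1 * (q * q - 1)))))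
      = (b * b - q * q) * (a * q * q * (a * q * q) - b * b) /
          (q * q * ((b * b - 1) * (a * q * (a * q) - b * b))) := by
    simp only [div_div_eq_mul_div, div_mul_eq_mul_div, mul_div_assoc', div_div, one_mul, mul_one]
    rw [div_eq_div_iff (by (repeat' apply mul_ne_zero) <;> first | assumption | exact one_ne_zero) (by (repeat' apply mul_ne_zero) <;> first | assumption | exact one_ne_zero)]
    ring
  rw [E1, E2, E3]
  rw [div_add_div _ _ (by (repeat' apply mul_ne_zero) <;> first | assumption | exact one_ne_zero) (by (repeat' apply mul_ne_zero) <;> first | assumption | exact one_ne_zero), div_add_div _ _ (by (repeat' apply mul_ne_zero) <;> first | assumption | exact one_ne_zero) (by (repeat' apply mul_ne_zero) <;> first | assumption | exact one_ne_zero),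
    div_eq_div_iff (by (repeat' apply mul_ne_zero) <;> first | assumption | exact one_ne_zero) (by (repeat' apply mul_ne_zero) <;> first | assumption | exact one_ne_zero)]
  ring
end

section
/- Let θ ∈ ℝ with sin θ ≠ 0 and set [m] := sin(mθ)/sin θ for m ∈ ℤ. Let u ∈ ℤ with [u] ≠ 0 and [u+1]·[u−1] ≥ 0. Then the real 2×2 matrix M := (1/[u]) · [[ [u+1], √([u+1][u−1]) ], [ √([u+1][u−1]), [u−1] ]] is symmetric and satisfies M·M = [2]·M. -/
/-!
The matrix `A = !![[u+1], s; s, [u-1]]` with `s = √([u+1][u-1])` has determinant zero, so by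
Cayley–Hamilton `A * A = (tr A) • A`. Its trace is `[u+1] + [u-1] = [2][u]`, and rescaling by
`1/[u]` turns this into the Hecke relation.
-/

/-- Trigonometric quantum integer `[m] = sin(mθ)/sin θ`. -/
noncomputable def qit (θ : ℝ) (m : ℤ) : ℝ := Real.sin (m * θ) / Real.sin θ

theorem qit_add_one_add_qit_sub_one (θ : ℝ) (u : ℤ) :
    qit θ (u + 1) + qit θ (u - 1) = qit θ 2 * qit θ u := by
  have hsum : Real.sin ((u + 1 : ℤ) * θ) + Real.sin ((u - 1 : ℤ) * θ)
      = 2 * Real.cos θ * Real.sin (u * θ) := by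
    push_cast
    rw [add_mul, sub_mul, one_mul, Real.sin_add, Real.sin_sub]
    ring
  have htwo : Real.sin ((2 : ℤ) * θ) = Real.sin θ * (2 * Real.cos θ) := by
    push_cast
    rw [Real.sin_two_mul]
    ring
  rcases eq_or_ne (Real.sin θ) 0 with hθ | hθ
  · simp [qit, hθ]
  · simp only [qit, ← add_div, hsum, htwo]
    field_simp

namespace Matrix

variable {α R : Type*}

theorem isSymm_fin_two (a b d : α) : !![a, b; b, d].IsSymm :=
  IsSymm.ext fun i j => by fin_cases i <;> fin_cases j <;> rfl

theorem mul_self_eq_trace_smul_sub_det_smul_one [CommRing R] (A : Matrix (Fin 2) (Fin 2) R) :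
    A * A = A.trace • A - A.det • 1 := by
  ext i j
  fin_cases i <;> fin_cases j <;>
    simp only [Fin.zero_eta, Fin.mk_one, Fin.isValue, mul_apply, Fin.sum_univ_two, trace_fin_two,
      det_fin_two, sub_apply, smul_apply, smul_eq_mul, one_apply_eq, ne_eq, zero_ne_one,
      one_ne_zero, not_false_eq_true, one_apply_ne, mul_one, mul_zero, sub_zero] <;> ring

end Matrix

theorem twoByTwo_hecke_block_general (θ : ℝ) (u : ℤ)
    (hu : qit θ u ≠ 0) (hprod : 0 ≤ qit θ (u + 1) * qit θ (u - 1)) :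
    ((1 / qit θ u) •
        !![qit θ (u + 1), Real.sqrt (qit θ (u + 1) * qit θ (u - 1));
           Real.sqrt (qit θ (u + 1) * qit θ (u - 1)), qit θ (u - 1)]).IsSymm ∧
    ((1 / qit θ u) •
        !![qit θ (u + 1), Real.sqrt (qit θ (u + 1) * qit θ (u - 1));
           Real.sqrt (qit θ (u + 1) * qit θ (u - 1)), qit θ (u - 1)]) *
      ((1 / qit θ u) •
        !![qit θ (u + 1), Real.sqrt (qit θ (u + 1) * qit θ (u - 1));
           Real.sqrt (qit θ (u + 1) * qit θ (u - 1)), qit θ (u - 1)])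
      = qit θ 2 •
        ((1 / qit θ u) •
          !![qit θ (u + 1), Real.sqrt (qit θ (u + 1) * qit θ (u - 1));
             Real.sqrt (qit θ (u + 1) * qit θ (u - 1)), qit θ (u - 1)]) := by
  set A := !![qit θ (u + 1), Real.sqrt (qit θ (u + 1) * qit θ (u - 1));
    Real.sqrt (qit θ (u + 1) * qit θ (u - 1)), qit θ (u - 1)]
  have hdet : A.det = 0 := by
    simp [A, Matrix.det_fin_two, Real.mul_self_sqrt hprod]
  have htrace : A.trace = qit θ 2 * qit θ u := by
    simp [A, Matrix.trace_fin_two, qit_add_one_add_qit_sub_one]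
  refine ⟨(Matrix.isSymm_fin_two _ _ _).smul _, ?_⟩
  rw [Matrix.smul_mul, Matrix.mul_smul, A.mul_self_eq_trace_smul_sub_det_smul_one, hdet,
    zero_smul, sub_zero, htrace, smul_smul, smul_smul, smul_smul]
  congr 1
  field_simp

/-- The 2×2 block U^a_{a+ε_i+ε_j} is symmetric and satisfies the Hecke
relation M·M = [2]·M. -/
theorem twoByTwo_hecke_block (θ : ℝ) (hθ : Real.sin θ ≠ 0) (u : ℤ)
    (hu : qit θ u ≠ 0) (hprod : 0 ≤ qit θ (u + 1) * qit θ (u - 1)) :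
    ((1 / qit θ u) •
        !![qit θ (u + 1), Real.sqrt (qit θ (u + 1) * qit θ (u - 1));
           Real.sqrt (qit θ (u + 1) * qit θ (u - 1)), qit θ (u - 1)]).IsSymm ∧
    ((1 / qit θ u) •
        !![qit θ (u + 1), Real.sqrt (qit θ (u + 1) * qit θ (u - 1));
           Real.sqrt (qit θ (u + 1) * qit θ (u - 1)), qit θ (u - 1)]) *
      ((1 / qit θ u) •
        !![qit θ (u + 1), Real.sqrt (qit θ (u + 1) * qit θ (u - 1));
           Real.sqrt (qit θ (u + 1) * qit θ (u - 1)), qit θ (u - 1)])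
      = qit θ 2 •
        ((1 / qit θ u) •
          !![qit θ (u + 1), Real.sqrt (qit θ (u + 1) * qit θ (u - 1));
             Real.sqrt (qit θ (u + 1) * qit θ (u - 1)), qit θ (u - 1)]) :=
  twoByTwo_hecke_block_general θ u hu hprod
end

section
/- Let θ ∈ ℝ with sin θ ≠ 0, set [m] := sin(mθ)/sin θ for m ∈ ℤ and μ(s,t) := [s][t][s−t][s+t]. Let s, t ∈ ℤ be such that [s−t], [s−t+1], [s−t−1], [s+t], [s+t+1], [s+t+2], μ(s,t), μ(s+1,t), μ(s,t+1) and μ(s+1,t+1) are all strictly positive. Define the real 2×2 matrices U := (1/[s−t]) · [[ [s−t+1], √([s−t+1][s−t−1]) ], [ √([s−t+1][s−t−1]), [s−t−1] ]] and B := [[ ([s−t+1]/[s−t])·√(μ(s+1,t+1)/μ(s,t)), (√([s+t][s+t+2])/[s+t+1])·√(μ(s+1,t)·μ(s,t+1))/μ(s,t) ], [ (√([s+t][s+t+2])/[s+t+1])·√(μ(s+1,t)·μ(s,t+1))/μ(s,t), ([s−t−1]/[s−t])·√(μ(s+1,t+1)/μ(s,t)) ]]. Then U·B = [2]·B. -/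
/-- Frobenius–Perron weight `μ(s,t) = [s][t][s−t][s+t]`. -/
noncomputable def fpw (θ : ℝ) (s t : ℤ) : ℝ :=
  qit θ s * qit θ t * qit θ (s - t) * qit θ (s + t)

/-- The U-cell matrix U^a_{a+ε₁+ε₂}. -/
noncomputable def Umat (θ : ℝ) (s t : ℤ) : Matrix (Fin 2) (Fin 2) ℝ :=
  (1 / qit θ (s - t)) •
    !![qit θ (s - t + 1), Real.sqrt (qit θ (s - t + 1) * qit θ (s - t - 1));
       Real.sqrt (qit θ (s - t + 1) * qit θ (s - t - 1)), qit θ (s - t - 1)]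

/-- The B-cell matrix B_{a,_,a+ε₁+ε₂,_} (up to normalisation). -/
noncomputable def Bmat (θ : ℝ) (s t : ℤ) : Matrix (Fin 2) (Fin 2) ℝ :=
  !![(qit θ (s - t + 1) / qit θ (s - t)) *
        Real.sqrt (fpw θ (s + 1) (t + 1) / fpw θ s t),
     (Real.sqrt (qit θ (s + t) * qit θ (s + t + 2)) / qit θ (s + t + 1)) *
        Real.sqrt (fpw θ (s + 1) t * fpw θ s (t + 1)) / fpw θ s t;
     (Real.sqrt (qit θ (s + t) * qit θ (s + t + 2)) / qit θ (s + t + 1)) *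
        Real.sqrt (fpw θ (s + 1) t * fpw θ s (t + 1)) / fpw θ s t,
     (qit θ (s - t - 1) / qit θ (s - t)) *
        Real.sqrt (fpw θ (s + 1) (t + 1) / fpw θ s t)]

lemma qit_two_mul (θ : ℝ) (n : ℤ) : qit θ 2 * qit θ n = qit θ (n + 1) + qit θ (n - 1) := by
  unfold qit
  push_cast
  rw [add_mul, sub_mul, one_mul, Real.sin_add, Real.sin_sub, Real.sin_two_mul]
  rcases eq_or_ne (Real.sin θ) 0 with h | h
  · simp [h]
  · field_simp
    ring

theorem Matrix.mul_self_eq_trace_smul_of_det_eq_zero {R : Type*} [CommRing R]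
    (N : Matrix (Fin 2) (Fin 2) R) (h : N.det = 0) : N * N = N.trace • N := by
  rw [Matrix.det_fin_two] at h
  ext i j
  fin_cases i <;> fin_cases j <;> simp [Matrix.mul_apply, Matrix.trace_fin_two]
  · linear_combination -h
  · ring
  · ring
  · linear_combination -h

lemma Umat_mul_self {θ : ℝ} {s t : ℤ} (hA : qit θ (s - t) ≠ 0)
    (hPM : 0 ≤ qit θ (s - t + 1) * qit θ (s - t - 1)) :
    Umat θ s t * Umat θ s t = qit θ 2 • Umat θ s t := by
  have hdet : (!![qit θ (s - t + 1), Real.sqrt (qit θ (s - t + 1) * qit θ (s - t - 1));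
      Real.sqrt (qit θ (s - t + 1) * qit θ (s - t - 1)), qit θ (s - t - 1)]).det = 0 := by
    rw [Matrix.det_fin_two_of, ← sq, Real.sq_sqrt hPM, sub_self]
  have htrace : qit θ (s - t + 1) + qit θ (s - t - 1) = qit θ 2 * qit θ (s - t) :=
    (qit_two_mul θ (s - t)).symm
  rw [Umat, smul_mul_smul, Matrix.mul_self_eq_trace_smul_of_det_eq_zero _ hdet,
    Matrix.trace_fin_two_of, htrace, smul_smul, smul_smul]
  congr 1
  field_simp

lemma qit_sq_mul_fpw_mul_fpw (θ : ℝ) (s t : ℤ) :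
    qit θ (s - t) ^ 2 * (qit θ (s + t) * qit θ (s + t + 2)) *
        (fpw θ (s + 1) t * fpw θ s (t + 1)) =
      qit θ (s - t + 1) * qit θ (s - t - 1) * qit θ (s + t + 1) ^ 2 *
        (fpw θ (s + 1) (t + 1) * fpw θ s t) := by
  simp only [fpw, show s + 1 - t = s - t + 1 by ring, show s + 1 + t = s + t + 1 by ring,
    show s - (t + 1) = s - t - 1 by ring, show s + (t + 1) = s + t + 1 by ring,
    show s + 1 - (t + 1) = s - t by ring, show s + 1 + (t + 1) = s + t + 2 by ring]
  ring

lemma Bmat_offDiag_eq {θ : ℝ} {s t : ℤ}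
    (hst : 0 < qit θ (s - t)) (hst₁ : 0 < qit θ (s - t + 1)) (hst₂ : 0 < qit θ (s - t - 1))
    (hpt : 0 < qit θ (s + t)) (hpt₁ : 0 < qit θ (s + t + 1)) (hpt₂ : 0 < qit θ (s + t + 2))
    (hμ : 0 < fpw θ s t) (hμ₁ : 0 < fpw θ (s + 1) t) (hμ₂ : 0 < fpw θ s (t + 1))
    (hμ₃ : 0 < fpw θ (s + 1) (t + 1)) :
    Real.sqrt (qit θ (s + t) * qit θ (s + t + 2)) / qit θ (s + t + 1) *
        Real.sqrt (fpw θ (s + 1) t * fpw θ s (t + 1)) / fpw θ s t =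
      Real.sqrt (fpw θ (s + 1) (t + 1) / fpw θ s t) *
        ((qit θ (s - t))⁻¹ * Real.sqrt (qit θ (s - t + 1) * qit θ (s - t - 1))) := by
  refine (pow_left_inj₀ (by positivity) (by positivity) two_ne_zero).1 ?_
  simp only [mul_pow, div_pow, inv_pow]
  rw [Real.sq_sqrt (by positivity), Real.sq_sqrt (by positivity), Real.sq_sqrt (by positivity),
    Real.sq_sqrt (by positivity)]
  field_simp
  linear_combination qit_sq_mul_fpw_mul_fpw θ s t

lemma Bmat_eq_smul_Umat {θ : ℝ} {s t : ℤ}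
    (hst : 0 < qit θ (s - t)) (hst₁ : 0 < qit θ (s - t + 1)) (hst₂ : 0 < qit θ (s - t - 1))
    (hpt : 0 < qit θ (s + t)) (hpt₁ : 0 < qit θ (s + t + 1)) (hpt₂ : 0 < qit θ (s + t + 2))
    (hμ : 0 < fpw θ s t) (hμ₁ : 0 < fpw θ (s + 1) t) (hμ₂ : 0 < fpw θ s (t + 1))
    (hμ₃ : 0 < fpw θ (s + 1) (t + 1)) :
    Bmat θ s t = Real.sqrt (fpw θ (s + 1) (t + 1) / fpw θ s t) • Umat θ s t := by
  have hoff := Bmat_offDiag_eq hst hst₁ hst₂ hpt hpt₁ hpt₂ hμ hμ₁ hμ₂ hμ₃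
  ext i j
  fin_cases i <;> fin_cases j <;> simp [Bmat, Umat, hoff] <;> ring

theorem braid_absorption_eps1_eps2_general (θ : ℝ) (s t : ℤ)
    (h1 : 0 < qit θ (s - t)) (h2 : 0 < qit θ (s - t + 1))
    (h3 : 0 < qit θ (s - t - 1)) (h4 : 0 < qit θ (s + t))
    (h5 : 0 < qit θ (s + t + 1)) (h6 : 0 < qit θ (s + t + 2))
    (h7 : 0 < fpw θ s t) (h8 : 0 < fpw θ (s + 1) t)
    (h9 : 0 < fpw θ s (t + 1)) (h10 : 0 < fpw θ (s + 1) (t + 1)) :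
    Umat θ s t * Bmat θ s t = qit θ 2 • Bmat θ s t := by
  rw [Bmat_eq_smul_Umat h1 h2 h3 h4 h5 h6 h7 h8 h9 h10, Matrix.mul_smul,
    Umat_mul_self h1.ne' (mul_nonneg h2.le h3.le), smul_comm]

/-- Braid absorption (BA): B is an eigenmatrix of U with eigenvalue [2]. -/
theorem braid_absorption_eps1_eps2 (θ : ℝ) (hθ : Real.sin θ ≠ 0) (s t : ℤ)
    (h1 : 0 < qit θ (s - t)) (h2 : 0 < qit θ (s - t + 1))
    (h3 : 0 < qit θ (s - t - 1)) (h4 : 0 < qit θ (s + t))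
    (h5 : 0 < qit θ (s + t + 1)) (h6 : 0 < qit θ (s + t + 2))
    (h7 : 0 < fpw θ s t) (h8 : 0 < fpw θ (s + 1) t)
    (h9 : 0 < fpw θ s (t + 1)) (h10 : 0 < fpw θ (s + 1) (t + 1)) :
    Umat θ s t * Bmat θ s t = qit θ 2 • Bmat θ s t :=
  braid_absorption_eps1_eps2_general θ s t h1 h2 h3 h4 h5 h6 h7 h8 h9 h10
end

section
/- Let θ := π/10 and set [m] := sin(mθ)/sin θ for m ∈ ℤ. Let M be the real 5×5 circulant matrix with first row (1/([2]²·[4]))·( [3][5], [3], −[3]², −[3]², [3] ), i.e. M_{j,k} = c_{(k−j) mod 5} with (c₀,c₁,c₂,c₃,c₄) = ( [3][5], [3], −[3]², −[3]², [3] )/([2]²·[4]). Then M is symmetric and M·M = [2]·M. -/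
/-- Trigonometric quantum integer `[m] = sin(m·π/10)/sin(π/10)`,
i.e. `[m]_q` at `q = e^{2πi/20}`. -/
noncomputable def qi10 (m : ℤ) : ℝ :=
  Real.sin (m * (Real.pi / 10)) / Real.sin (Real.pi / 10)

/-- First row of the circulant 5×5 block U^{d_i}_{d_{i+1}}. -/
noncomputable def circRow : Fin 5 → ℝ :=
  ![qi10 3 * qi10 5 / (qi10 2 ^ 2 * qi10 4),
    qi10 3 / (qi10 2 ^ 2 * qi10 4),
    -(qi10 3 ^ 2) / (qi10 2 ^ 2 * qi10 4),
    -(qi10 3 ^ 2) / (qi10 2 ^ 2 * qi10 4),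
    qi10 3 / (qi10 2 ^ 2 * qi10 4)]

/-- The circulant matrix M with M_{j,k} = c_{(k−j) mod 5}. -/
noncomputable def circMat : Matrix (Fin 5) (Fin 5) ℝ :=
  Matrix.of fun j k => circRow (k - j)

/-!
At `θ = π/10` the only trigonometric input is `[2]² = 2 + 2 cos(π/5) = φ + 2`; the recursion
`[m + 2] = [2][m + 1] - [m]` then gives `[3] = φ²`, `[4] = φ[2]`, `[5] = 2φ`.
The matrix is the circulant of the palindromic row `([3][5], [3], -[3]², -[3]², [3]) / ([2]²[4])`,
hence symmetric; since circulants multiply by convolving their rows, `M² = [2] M` reduces to three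
polynomial identities in `φ`, each a multiple of `φ² - φ - 1`.
-/

open Real Matrix goldenRatio

lemma palindrome_five_neg_apply {α : Type*} (a b c : α) (i : Fin 5) :
    ![a, b, c, c, b] (-i) = ![a, b, c, c, b] i := by
  fin_cases i <;> rfl

lemma circulant_palindrome_five_isSymm {α : Type*} (a b c : α) :
    (circulant ![a, b, c, c, b]).IsSymm :=
  Fin.circulant_isSymm_iff.mpr (palindrome_five_neg_apply a b c)

lemma circulant_palindrome_five_mulVec_self {R : Type*} [CommRing R] (a b c t : R)
    (h₀ : a ^ 2 + 2 * b ^ 2 + 2 * c ^ 2 = t * a)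
    (h₁ : 2 * a * b + 2 * b * c + c ^ 2 = t * b)
    (h₂ : 2 * a * c + b ^ 2 + 2 * b * c = t * c) :
    circulant ![a, b, c, c, b] *ᵥ ![a, b, c, c, b] = t • ![a, b, c, c, b] := by
  ext i
  fin_cases i <;>
    simp only [mulVec, dotProduct, circulant_apply, Fin.sum_univ_five, Fin.isValue, Fin.zero_eta,
      Fin.mk_one, Fin.reduceFinMk, Fin.reduceSub, zero_sub, neg_zero, sub_zero, sub_self,
      cons_val_zero, cons_val_one, cons_val, Pi.smul_apply, smul_eq_mul]
  · linear_combination h₀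
  · linear_combination h₁
  · linear_combination h₂
  · linear_combination h₂
  · linear_combination h₁

lemma circulant_mulVec_self_smul {R : Type*} [CommRing R] {n : ℕ} {v : Fin n → R} {t : R}
    (h : circulant v *ᵥ v = t • v) (u : R) :
    circulant (u • v) *ᵥ (u • v) = (u * t) • (u • v) := by
  rw [circulant_smul, smul_mulVec, mulVec_smul, h, smul_smul, smul_smul, smul_smul]
  congr 1
  ring

lemma sin_pi_div_ten_ne_zero : sin (π / 10) ≠ 0 :=
  (sin_pos_of_pos_of_lt_pi (by positivity) (by linarith [pi_pos])).ne'

lemma qi10_one : qi10 1 = 1 := by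
  simp [qi10, sin_pi_div_ten_ne_zero]

lemma qi10_two : qi10 2 = 2 * cos (π / 10) := by
  rw [qi10, Int.cast_two, sin_two_mul, mul_assoc, mul_div_assoc,
    mul_div_cancel_left₀ _ sin_pi_div_ten_ne_zero]

lemma qi10_add_two (m : ℤ) : qi10 (m + 2) = qi10 2 * qi10 (m + 1) - qi10 m := by
  have hsum : sin ((m + 2 : ℤ) * (π / 10)) + sin (m * (π / 10))
      = 2 * cos (π / 10) * sin ((m + 1 : ℤ) * (π / 10)) := by
    push_cast
    rw [show ((m : ℝ) + 2) * (π / 10) = (m + 1) * (π / 10) + π / 10 by ring,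
      show (m : ℝ) * (π / 10) = (m + 1) * (π / 10) - π / 10 by ring, sin_add, sin_sub]
    ring
  rw [qi10_two, qi10, qi10, qi10, eq_sub_iff_add_eq, ← add_div, hsum, mul_div_assoc]

lemma qi10_two_sq : qi10 2 ^ 2 = φ + 2 := by
  rw [qi10_two, mul_pow, cos_sq, show 2 * (π / 10) = π / 5 by ring, cos_pi_div_five]
  ring

lemma qi10_three : qi10 3 = φ ^ 2 := by
  have h := qi10_add_two 1
  norm_num [qi10_one] at h
  rw [h]
  linear_combination qi10_two_sq - goldenRatio_sq

lemma qi10_four : qi10 4 = φ * qi10 2 := by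
  have h := qi10_add_two 2
  norm_num at h
  rw [h, qi10_three]
  linear_combination qi10 2 * goldenRatio_sq

lemma qi10_five : qi10 5 = 2 * φ := by
  have h := qi10_add_two 3
  norm_num at h
  rw [h, qi10_four, qi10_three]
  linear_combination φ * qi10_two_sq

lemma qi10_denom_mul_qi10_two : qi10 2 ^ 2 * qi10 4 * qi10 2 = 5 * φ ^ 3 := by
  rw [qi10_four]
  linear_combination (qi10 2 ^ 2 + φ + 2) * φ * qi10_two_sq - 4 * φ * goldenRatio_sq

lemma qi10_denom_ne_zero : qi10 2 ^ 2 * qi10 4 ≠ 0 :=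
  left_ne_zero_of_mul (b := qi10 2) (by rw [qi10_denom_mul_qi10_two]; positivity)

lemma circRow_eq_smul :
    circRow = (qi10 2 ^ 2 * qi10 4)⁻¹ •
      ![qi10 3 * qi10 5, qi10 3, -(qi10 3 ^ 2), -(qi10 3 ^ 2), qi10 3] := by
  ext i
  fin_cases i <;> simp [circRow, div_eq_inv_mul]

lemma circulant_circRow_mulVec_self : circulant circRow *ᵥ circRow = qi10 2 • circRow := by
  have hw := circulant_palindrome_five_mulVec_self (qi10 3 * qi10 5) (qi10 3) (-(qi10 3 ^ 2))
    (qi10 2 ^ 2 * qi10 4 * qi10 2)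
    (by rw [qi10_denom_mul_qi10_two, qi10_three, qi10_five]
        linear_combination (2 * φ ^ 6 + 2 * φ ^ 5 - 2 * φ ^ 4) * goldenRatio_sq)
    (by rw [qi10_denom_mul_qi10_two, qi10_three, qi10_five]
        linear_combination (φ ^ 6 + φ ^ 5) * goldenRatio_sq)
    (by rw [qi10_denom_mul_qi10_two, qi10_three, qi10_five]
        linear_combination (φ ^ 5 - φ ^ 4) * goldenRatio_sq)
  rw [circRow_eq_smul, circulant_mulVec_self_smul hw, inv_mul_cancel_left₀ qi10_denom_ne_zero]

/-- The 5×5 circulant block U^{d_i}_{d_{i+1}} of the exceptional cell system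
on Γ^{4,6,⊂} is symmetric and satisfies the Hecke relation. -/
theorem circulant_hecke_block :
    circMat.IsSymm ∧ circMat * circMat = qi10 2 • circMat := by
  have hsymm : (circulant circRow).IsSymm := circulant_palindrome_five_isSymm _ _ _
  -- `circMat` is `(circulant circRow)ᵀ` by definition
  have hM : circMat = circulant circRow := hsymm
  rw [hM, circulant_mul, circulant_circRow_mulVec_self, circulant_smul]
  exact ⟨hsymm, rfl⟩
end

section
/- Let θ := π/8 and set [m] := sin(mθ)/sin θ for m ∈ ℤ. Then each of the following complex 2×2 matrices M satisfies M·M = [2]·M and is Hermitian: (i) M = [[ [3]/[4] + √[3]/[2], −1/[4] ], [ −1/[4], [3]/[4] − √[3]/[2] ]]; (ii) M = [[ [3]/[4] − √[3]/[2], i/[4] ], [ −i/[4], [3]/[4] + √[3]/[2] ]]; (iii) M = [[ ([3] + √[3])/[4], −√[3]/√([2][4]) ], [ −√[3]/√([2][4]), ([3] − √[3])/[4] ]], where i is the imaginary unit and √ is the real square root. -/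
/-- Trigonometric quantum integer `[m] = sin(m·π/8)/sin(π/8)`,
i.e. `[m]_q` at `q = e^{2πi/16}`. -/
noncomputable def qi8 (m : ℤ) : ℝ :=
  Real.sin (m * (Real.pi / 8)) / Real.sin (Real.pi / 8)

open Real
lemma hSpos : 0 < Real.sin (π/8) :=
  Real.sin_pos_of_pos_of_lt_pi (by positivity) (by linarith [pi_pos])

lemma hCpos : 0 < Real.cos (π/8) :=
  Real.cos_pos_of_mem_Ioo ⟨by linarith [pi_pos], by linarith [pi_pos]⟩

lemma hsc : Real.sin (π/8) * Real.cos (π/8) = Real.sqrt 2 / 4 := by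
  have h := Real.sin_two_mul (π/8)
  rw [show 2 * (π/8) = π/4 by ring, Real.sin_pi_div_four] at h
  linarith

lemma hcq : Real.cos (π/8) ^ 2 = (2 + Real.sqrt 2) / 4 := by
  rw [Real.cos_pi_div_eight, div_pow, Real.sq_sqrt (by positivity)]
  norm_num

lemma hsq : Real.sin (π/8) ^ 2 = (2 - Real.sqrt 2) / 4 := by
  have h2 : Real.sqrt 2 ≤ 2 := by
    nlinarith [Real.sq_sqrt (show (0:ℝ) ≤ 2 by norm_num), Real.sqrt_nonneg 2]
  rw [Real.sin_pi_div_eight, div_pow, Real.sq_sqrt (by linarith)]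
  norm_num

lemma q2 : qi8 2 = 2 * Real.cos (π/8) := by
  unfold qi8
  push_cast
  rw [show (2:ℝ) * (π/8) = 2 * (π/8) by ring, Real.sin_two_mul,
    div_eq_iff hSpos.ne']
  ring

lemma q3 : qi8 3 = Real.cos (π/8) / Real.sin (π/8) := by
  unfold qi8
  push_cast
  rw [show (3:ℝ) * (π/8) = π/2 - π/8 by ring, Real.sin_pi_div_two_sub]

lemma q4 : qi8 4 = 1 / Real.sin (π/8) := by
  unfold qi8
  push_cast
  rw [show (4:ℝ) * (π/8) = π/2 by ring, Real.sin_pi_div_two]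

lemma q3pos : 0 < qi8 3 := by rw [q3]; exact div_pos hCpos hSpos

lemma hx : qi8 3 / qi8 4 = Real.cos (π/8) := by
  rw [q3, q4, one_div, div_inv_eq_mul, div_mul_cancel₀ _ hSpos.ne']

lemma hs0 : 1 / qi8 4 = Real.sin (π/8) := by
  rw [q4, one_div_one_div]

lemma h2x : 2 * (qi8 3 / qi8 4) = qi8 2 := by rw [hx, q2]

lemma hsqrt2 : Real.sqrt 2 * Real.sqrt 2 = 2 := Real.mul_self_sqrt (by norm_num)

lemma hb2 : (Real.sqrt (qi8 3) / qi8 2) ^ 2 = Real.sqrt 2 / 2 := by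
  rw [div_pow, Real.sq_sqrt q3pos.le, q3, q2]
  have h1 : Real.cos (π/8) / Real.sin (π/8) / (2 * Real.cos (π/8)) ^ 2
      = 1 / (4 * (Real.sin (π/8) * Real.cos (π/8))) := by
    rw [div_div, div_eq_div_iff
      (mul_pos hSpos (pow_pos (by linarith [hCpos]) 2)).ne'
      (by nlinarith [hSpos, hCpos] : (4:ℝ) * (Real.sin (π/8) * Real.cos (π/8)) ≠ 0)]
    ring
  rw [h1, hsc]
  rw [div_eq_div_iff (by positivity) (by norm_num)]
  nlinarith [hsqrt2]

lemma hd : Real.sqrt (qi8 3) / Real.sqrt (qi8 2 * qi8 4) = Real.sqrt 2 / 2 := by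
  have h24 : qi8 2 * qi8 4 = 2 * qi8 3 := by
    rw [q2, q3, q4]; ring
  rw [h24, Real.sqrt_mul (by norm_num : (0:ℝ) ≤ 2)]
  have hu : 0 < Real.sqrt (qi8 3) := Real.sqrt_pos.mpr q3pos
  rw [div_eq_div_iff (by positivity) (by norm_num)]
  nlinarith [hsqrt2, hu]

lemma hE : (qi8 3 + Real.sqrt (qi8 3)) / qi8 4
    = Real.cos (π/8) + Real.sin (π/8) * Real.sqrt (qi8 3) := by
  rw [q4, q3, div_div_eq_mul_div, div_one, add_mul,
    div_mul_cancel₀ _ hSpos.ne', mul_comm]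

lemma hE' : (qi8 3 - Real.sqrt (qi8 3)) / qi8 4
    = Real.cos (π/8) - Real.sin (π/8) * Real.sqrt (qi8 3) := by
  rw [q4, q3, div_div_eq_mul_div, div_one, sub_mul,
    div_mul_cancel₀ _ hSpos.ne', mul_comm]

lemma hsu2 : (Real.sin (π/8) * Real.sqrt (qi8 3)) ^ 2 = Real.sqrt 2 / 4 := by
  rw [mul_pow, Real.sq_sqrt q3pos.le, q3, ← hsc]
  rw [pow_two, mul_assoc, mul_div_cancel₀ _ hSpos.ne']

lemma key1 : (qi8 3/qi8 4 + Real.sqrt (qi8 3)/qi8 2)^2 + (1/qi8 4)^2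
    = qi8 2 * (qi8 3/qi8 4 + Real.sqrt (qi8 3)/qi8 2) := by
  have hb := hb2
  set b := Real.sqrt (qi8 3)/qi8 2 with hbdef
  rw [hx, hs0, q2]
  linear_combination hb + hsq - hcq

lemma key2 : (qi8 3/qi8 4 - Real.sqrt (qi8 3)/qi8 2)^2 + (1/qi8 4)^2
    = qi8 2 * (qi8 3/qi8 4 - Real.sqrt (qi8 3)/qi8 2) := by
  have hb := hb2
  set b := Real.sqrt (qi8 3)/qi8 2 with hbdef
  rw [hx, hs0, q2]
  linear_combination hb + hsq - hcq

lemma key4 : ((qi8 3 + Real.sqrt (qi8 3))/qi8 4)^2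
      + (Real.sqrt (qi8 3)/Real.sqrt (qi8 2 * qi8 4))^2
    = qi8 2 * ((qi8 3 + Real.sqrt (qi8 3))/qi8 4) := by
  rw [hE, hd, q2]
  linear_combination hsu2 - hcq + (1/4) * hsqrt2

lemma key5 : ((qi8 3 - Real.sqrt (qi8 3))/qi8 4)^2
      + (Real.sqrt (qi8 3)/Real.sqrt (qi8 2 * qi8 4))^2
    = qi8 2 * ((qi8 3 - Real.sqrt (qi8 3))/qi8 4) := by
  rw [hE', hd, q2]
  linear_combination hsu2 - hcq + (1/4) * hsqrt2

lemma keyE : (qi8 3 + Real.sqrt (qi8 3))/qi8 4 + (qi8 3 - Real.sqrt (qi8 3))/qi8 4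
    = qi8 2 := by
  rw [hE, hE', q2]; ring

/-- The block U^{10}_{11}. -/
noncomputable def M1013 : Matrix (Fin 2) (Fin 2) ℂ :=
  !![((qi8 3 / qi8 4 + Real.sqrt (qi8 3) / qi8 2 : ℝ) : ℂ),
     ((-(1 / qi8 4) : ℝ) : ℂ);
     ((-(1 / qi8 4) : ℝ) : ℂ),
     ((qi8 3 / qi8 4 - Real.sqrt (qi8 3) / qi8 2 : ℝ) : ℂ)]

/-- The block U^{8}_{9}. -/
noncomputable def M8913 : Matrix (Fin 2) (Fin 2) ℂ :=
  !![((qi8 3 / qi8 4 - Real.sqrt (qi8 3) / qi8 2 : ℝ) : ℂ),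
     Complex.I * ((1 / qi8 4 : ℝ) : ℂ);
     -Complex.I * ((1 / qi8 4 : ℝ) : ℂ),
     ((qi8 3 / qi8 4 + Real.sqrt (qi8 3) / qi8 2 : ℝ) : ℂ)]

/-- The block U^{3}_{8}. -/
noncomputable def M3813 : Matrix (Fin 2) (Fin 2) ℂ :=
  !![(((qi8 3 + Real.sqrt (qi8 3)) / qi8 4 : ℝ) : ℂ),
     ((-(Real.sqrt (qi8 3) / Real.sqrt (qi8 2 * qi8 4)) : ℝ) : ℂ);
     ((-(Real.sqrt (qi8 3) / Real.sqrt (qi8 2 * qi8 4)) : ℝ) : ℂ),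
     (((qi8 3 - Real.sqrt (qi8 3)) / qi8 4 : ℝ) : ℂ)]

/-- The three 2×2 blocks of the level-4 conformal-inclusion cell system are
Hermitian and satisfy the Hecke relation. -/
theorem level4_twoByTwo_hecke_blocks :
    (M1013 * M1013 = ((qi8 2 : ℝ) : ℂ) • M1013 ∧ M1013.IsHermitian) ∧
    (M8913 * M8913 = ((qi8 2 : ℝ) : ℂ) • M8913 ∧ M8913.IsHermitian) ∧
    (M3813 * M3813 = ((qi8 2 : ℝ) : ℂ) • M3813 ∧ M3813.IsHermitian) := by
  
  have k1C := congrArg (fun r : ℝ => (r : ℂ)) key1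
  have k2C := congrArg (fun r : ℝ => (r : ℂ)) key2
  have k4C := congrArg (fun r : ℝ => (r : ℂ)) key4
  have k5C := congrArg (fun r : ℝ => (r : ℂ)) key5
  have h2xC := congrArg (fun r : ℝ => (r : ℂ)) h2x
  push_cast at k1C k2C k4C k5C h2xC
  refine ⟨⟨?_, ?_⟩, ⟨?_, ?_⟩, ⟨?_, ?_⟩⟩
  · ext i j
    fin_cases i <;> fin_cases j <;>
      simp [M1013, Matrix.mul_apply, Fin.sum_univ_two] <;>
      push_cast
    · linear_combination k1C
    · linear_combination (-(1/((qi8 4 : ℝ):ℂ))) * h2xC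
    · linear_combination (-(1/((qi8 4 : ℝ):ℂ))) * h2xC
    · linear_combination k2C
  · ext i j
    fin_cases i <;> fin_cases j <;>
      simp [M1013, Matrix.conjTranspose_apply]
  · ext i j
    fin_cases i <;> fin_cases j <;>
      simp [M8913, Matrix.mul_apply, Fin.sum_univ_two] <;>
      push_cast
    · linear_combination k2C - (1/((qi8 4 : ℝ):ℂ))^2 * Complex.I_sq
    · linear_combination (Complex.I * (1/((qi8 4 : ℝ):ℂ))) * h2xC
    · linear_combination (-(Complex.I) * (1/((qi8 4 : ℝ):ℂ))) * h2xC
    · linear_combination k1C - (1/((qi8 4 : ℝ):ℂ))^2 * Complex.I_sq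
  · ext i j
    fin_cases i <;> fin_cases j <;>
      simp [M8913, Matrix.conjTranspose_apply]
  · have kEC := congrArg (fun r : ℝ => (r : ℂ)) keyE
    push_cast at kEC
    ext i j
    fin_cases i <;> fin_cases j <;>
      simp [M3813, Matrix.mul_apply, Fin.sum_univ_two] <;>
      push_cast
    · linear_combination k4C
    · linear_combination
        (-(((Real.sqrt (qi8 3) : ℝ):ℂ)/((Real.sqrt (qi8 2 * qi8 4) : ℝ):ℂ))) * kEC
    · linear_combination
        (-(((Real.sqrt (qi8 3) : ℝ):ℂ)/((Real.sqrt (qi8 2 * qi8 4) : ℝ):ℂ))) * kEC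
    · linear_combination k5C
  · ext i j
    fin_cases i <;> fin_cases j <;>
      simp [M3813, Matrix.conjTranspose_apply]
end

section
/- Let k be a natural number and let q ∈ ℂ with q ≠ 0 and q^{k+4} = −1. Let t ∈ ℤ be such that q^{2t} ≠ q^{k+2} and q^{k+2t+6} ≠ 1. Then [ ((q²−1)(q^{k+2}−1)·q^{k+4}) / (q^{2t} − q^{k+2}) − ((q²−1)(q^{k+6}−1)) / (q^{k+2t+6} − 1) + q^{k+4} + 2q^{k+6} − 2q⁴ − 1 ] / ( q²·(q^{k+4} − 1) ) = 1 + q² + q^{−2}. -/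
/-!
Put `u = q ^ (k + 2)`, so that `u * q ^ 2 = -1`. Then `q ^ (k + 6) = u⁻¹` and
`q ^ (k + 2t + 6) = u⁻¹ * q ^ (2t)`, so the second fraction is the first one with numerator
and denominator multiplied by `u⁻¹`: the two `t`-dependent terms cancel (also when their common
denominator vanishes, both being `0` then). What is left is
`(-2 - 2 q² - 2 q⁴) / (-2 q²) = q² + 1 + q⁻²`.
-/

section

variable {K : Type*} [Field K]

theorem ne_zero_of_pow_succ_eq_neg_one {q : K} {n : ℕ} (h : q ^ (n + 1) = -1) : q ≠ 0 :=
  ne_zero_pow n.succ_ne_zero (h ▸ neg_ne_zero.mpr one_ne_zero)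

theorem orbifold_split_vertex_fractions_eq {q : K} {k : ℕ} (hk : q ^ (k + 4) = -1) (t : ℤ) :
    (q ^ 2 - 1) * (q ^ (k + 2) - 1) * q ^ (k + 4) / (q ^ (2 * t) - q ^ ((k : ℤ) + 2)) =
      (q ^ 2 - 1) * (q ^ (k + 6) - 1) / (q ^ ((k : ℤ) + 2 * t + 6) - 1) := by
  have hq : q ≠ 0 := ne_zero_of_pow_succ_eq_neg_one hk
  set u := q ^ (k + 2) with hu_def
  set s := q ^ (2 * t)
  have hu : u ≠ 0 := pow_ne_zero _ hq
  have hk6 : q ^ (k + 6) = u⁻¹ := by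
    refine eq_inv_of_mul_eq_one_left ?_
    rw [hu_def, ← pow_add, show k + 6 + (k + 2) = (k + 4) + (k + 4) by ring, pow_add, hk,
      neg_one_mul, neg_neg]
  have hzu : q ^ ((k : ℤ) + 2) = u := by exact_mod_cast zpow_natCast q (k + 2)
  have hzs : q ^ ((k : ℤ) + 2 * t + 6) = u⁻¹ * s := by
    rw [show (k : ℤ) + 2 * t + 6 = ((k + 6 : ℕ) : ℤ) + 2 * t by push_cast; ring,
      zpow_add₀ hq, zpow_natCast, hk6]
  rw [hk, hk6, hzu, hzs, show u⁻¹ * s - 1 = u⁻¹ * (s - u) by field_simp,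
    show (q ^ 2 - 1) * (u⁻¹ - 1) = u⁻¹ * ((q ^ 2 - 1) * (1 - u)) by field_simp,
    mul_div_mul_left _ _ (inv_ne_zero hu)]
  ring

end

theorem orbifold_R1_split_vertex_general (k : ℕ) (q : ℂ)
    (hk : q ^ (k + 4) = -1) (t : ℤ) :
    (((q ^ 2 - 1) * (q ^ (k + 2) - 1) * q ^ (k + 4)) /
          (q ^ (2 * t) - q ^ ((k : ℤ) + 2))
        - ((q ^ 2 - 1) * (q ^ (k + 6) - 1)) / (q ^ ((k : ℤ) + 2 * t + 6) - 1)
        + q ^ (k + 4) + 2 * q ^ (k + 6) - 2 * q ^ 4 - 1) /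
      (q ^ 2 * (q ^ (k + 4) - 1))
    = 1 + q ^ 2 + q ^ (-2 : ℤ) := by
  have hq : q ≠ 0 := ne_zero_of_pow_succ_eq_neg_one hk
  have hk6 : q ^ (k + 6) = -q ^ 2 := by rw [pow_add q (k + 4) 2, hk, neg_one_mul]
  rw [orbifold_split_vertex_fractions_eq hk t, sub_self, zero_add, hk, hk6, zpow_neg,
    zpow_ofNat]
  field_simp
  ring

/-- The scalar identity verifying relation (R1) at a split vertex of the
orbifold graph Γ^{4,k,ℤ₄*}. -/
theorem orbifold_R1_split_vertex (k : ℕ) (q : ℂ) (hq : q ≠ 0)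
    (hk : q ^ (k + 4) = -1) (t : ℤ)
    (h1 : q ^ (2 * t) ≠ q ^ ((k : ℤ) + 2))
    (h2 : q ^ ((k : ℤ) + 2 * t + 6) ≠ 1) :
    (((q ^ 2 - 1) * (q ^ (k + 2) - 1) * q ^ (k + 4)) /
          (q ^ (2 * t) - q ^ ((k : ℤ) + 2))
        - ((q ^ 2 - 1) * (q ^ (k + 6) - 1)) / (q ^ ((k : ℤ) + 2 * t + 6) - 1)
        + q ^ (k + 4) + 2 * q ^ (k + 6) - 2 * q ^ 4 - 1) /
      (q ^ 2 * (q ^ (k + 4) - 1))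
    = 1 + q ^ 2 + q ^ (-2 : ℤ) :=
  orbifold_R1_split_vertex_general k q hk t
end
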